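/- arXiv:2109.09200 — 3 statements merged into one kernel-verified Lean document; each statement's English description precedes it below -/
import Mathlib

section
/- Let B be a building set on a finite ground set V, and let N, N' be two maximal B-nested sets with N \ {B₀} = N' \ {B₀'} for distinct blocks B₀ ∈ N, B₀' ∈ N'. Then {C ∈ N : B₀ ⊊ C} = {C' ∈ N' : B₀' ⊊ C'}. -/
open scoped Classical

variable {V : Type*} [Fintype V] [DecidableEq V]

/-- A building set on the finite ground set `V`. -/
def IsBuildingSet (B : Finset (Finset V)) : Prop :=
  (∀ b ∈ B, b.Nonempty) ∧
  (∀ b₁ ∈ B, ∀ b₂ ∈ B, (b₁ ∩ b₂).Nonempty → b₁ ∪ b₂ ∈ B) ∧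
  (∀ v : V, {v} ∈ B)

/-- `M` is an inclusion-maximal block of `B` strictly contained in `P`. -/
def MaxIn (B : Finset (Finset V)) (P M : Finset V) : Prop :=
  M ∈ B ∧ M ⊂ P ∧ ∀ C ∈ B, M ⊂ C → ¬ C ⊂ P

/-- The block `P` is elementary. -/
def Elementary (B : Finset (Finset V)) (P : Finset V) : Prop :=
  ∀ B' ∈ B, ∀ B'' ∈ B, B' ≠ P → B'' ≠ P → P = B' ∪ B'' → B' ∩ B'' = ∅

/-- The connected components of `U`: inclusion-maximal blocks of `B` contained in `U`. -/
noncomputable def ccSet (B : Finset (Finset V)) (U : Finset V) : Finset (Finset V) :=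
  B.filter (fun K => K ⊆ U ∧ ∀ C ∈ B, C ⊆ U → K ⊆ C → K = C)

/-- A `B`-nested set: contained in `B`, containing all maximal elements of `B`,
and such that for every subset `X` whose union lies in `B`, the union lies in `X`. -/
def IsNested (B N : Finset (Finset V)) : Prop :=
  N ⊆ B ∧
  (∀ K ∈ B, (∀ C ∈ B, K ⊆ C → K = C) → K ∈ N) ∧
  (∀ X ⊆ N, X.sup id ∈ B → X.sup id ∈ X)

/-- A maximal `B`-nested set (inclusion-maximal among `B`-nested sets). -/
def IsMaxNested (B N : Finset (Finset V)) : Prop :=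
  IsNested B N ∧ ∀ N', IsNested B N' → N ⊆ N' → N = N'

/-- Two blocks are exchangeable if two maximal nested sets differ exactly by them. -/
def ExchangeableB (B : Finset (Finset V)) (b b' : Finset V) : Prop :=
  b ≠ b' ∧ ∃ N N', IsMaxNested B N ∧ IsMaxNested B N' ∧ b ∈ N ∧ b' ∈ N' ∧
    N.erase b = N'.erase b'

/-- `P` is the parent of `b` in `N`: the unique minimal element of `{C ∈ N | b ⊊ C}`. -/
def IsParent (N : Finset (Finset V)) (b P : Finset V) : Prop :=
  P ∈ N ∧ b ⊂ P ∧ ∀ C ∈ N, b ⊂ C → P ⊆ C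

/-- `(b, b', P)` is an exchange frame. -/
def IsExchangeFrame (B : Finset (Finset V)) (b b' P : Finset V) : Prop :=
  ∃ N N', IsMaxNested B N ∧ IsMaxNested B N' ∧ b ∈ N ∧ b' ∈ N' ∧ b ≠ b' ∧
    N.erase b = N'.erase b' ∧ IsParent N b P

/-- Characteristic vector of a subset of `V` in `ℝ^V`. -/
def chi (S : Finset V) : V → ℝ := fun v => if v ∈ S then 1 else 0

/-- The root of `C` in the nested set `N`. -/
noncomputable def root (N : Finset (Finset V)) (C : Finset V) : Finset V :=
  C \ (N.filter (fun D => D ⊂ C)).sup id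

set_option linter.unusedSectionVars false
set_option linter.unusedVariables false

private lemma mem_other' {N N' : Finset (Finset V)} {b b' x : Finset V}
    (hadj : N.erase b = N'.erase b') (hx : x ∈ N) (hxb : x ≠ b) : x ∈ N' :=
  Finset.mem_of_mem_erase (hadj ▸ Finset.mem_erase.2 ⟨hxb, hx⟩)

private lemma sup_eq_of_mem {X : Finset (Finset V)} {a : Finset V} (ha : a ∈ X) :
    X.sup id = a ∪ (X.erase a).sup id := by
  conv_lhs => rw [← Finset.insert_erase ha]
  rw [Finset.sup_insert, id_eq, Finset.sup_eq_union]

private lemma nested_comparable {B N : Finset (Finset V)} (hB : IsBuildingSet B)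
    (hN : IsNested B N) {C D : Finset V} (hC : C ∈ N) (hD : D ∈ N)
    (h : (C ∩ D).Nonempty) : C ⊆ D ∨ D ⊆ C := by
  have hU : C ∪ D ∈ B := hB.2.1 C (hN.1 hC) D (hN.1 hD) h
  have hsub : ({C, D} : Finset (Finset V)) ⊆ N := by
    intro x hx
    rcases Finset.mem_insert.1 hx with rfl | hx
    · exact hC
    · rw [Finset.mem_singleton.1 hx]; exact hD
  have hsup : ({C, D} : Finset (Finset V)).sup id = C ∪ D := by
    simp [Finset.sup_insert, Finset.sup_singleton, Finset.sup_eq_union]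
  have hmem := hN.2.2 _ hsub (by rw [hsup]; exact hU)
  rw [hsup] at hmem
  rcases Finset.mem_insert.1 hmem with h1 | h1
  · right; exact Finset.union_eq_left.1 h1
  · left; exact Finset.union_eq_right.1 (Finset.mem_singleton.1 h1)

private lemma not_mem_other {B N N' : Finset (Finset V)}
    (hN : IsMaxNested B N) (hN' : IsMaxNested B N') {b b' : Finset V}
    (hb' : b' ∈ N') (hne : b ≠ b') (hadj : N.erase b = N'.erase b') : b ∉ N' := by
  intro hbN'
  have hsub : N ⊆ N' := by
    intro x hx
    by_cases hxb : x = b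
    · exact hxb ▸ hbN'
    · exact mem_other' hadj hx hxb
  have heq := hN.2 N' hN'.1 hsub
  have hb'N : b' ∈ N := heq ▸ hb'
  have : b' ∈ N'.erase b' := hadj ▸ Finset.mem_erase.2 ⟨hne.symm, hb'N⟩
  exact (Finset.mem_erase.1 this).1 rfl

private lemma not_subset_of_exch {B N N' : Finset (Finset V)} (hB : IsBuildingSet B)
    (hN : IsMaxNested B N) (hN' : IsMaxNested B N') {b b' : Finset V}
    (hb : b ∈ N) (hb' : b' ∈ N') (hne : b ≠ b')
    (hadj : N.erase b = N'.erase b') : ¬ b ⊆ b' := by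
  intro hss
  have hb'N : b' ∉ N := not_mem_other hN' hN hb hne.symm hadj.symm
  have hnested : IsNested B (insert b' N) := by
    refine ⟨?_, ?_, ?_⟩
    · intro x hx
      rcases Finset.mem_insert.1 hx with rfl | hx
      · exact hN'.1.1 hb'
      · exact hN.1.1 hx
    · intro K hK hmax; exact Finset.mem_insert_of_mem (hN.1.2.1 K hK hmax)
    · intro X hX hsup
      by_cases hb'X : b' ∈ X
      · have hXN' : X.erase b ⊆ N' := by
          intro x hx
          obtain ⟨hxb, hxX⟩ := Finset.mem_erase.1 hx
          rcases Finset.mem_insert.1 (hX hxX) with rfl | h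
          · exact hb'
          · exact mem_other' hadj h hxb
        have hsupeq : (X.erase b).sup id = X.sup id := by
          by_cases hbX : b ∈ X
          · have h1 := sup_eq_of_mem hbX
            have h2 : b ⊆ (X.erase b).sup id :=
              hss.trans (Finset.le_sup (f := id) (Finset.mem_erase.2 ⟨hne.symm, hb'X⟩))
            rw [h1]
            exact (Finset.union_eq_right.2 h2).symm
          · rw [Finset.erase_eq_of_notMem hbX]
        have hm := hN'.1.2.2 _ hXN' (by rw [hsupeq]; exact hsup)
        rw [hsupeq] at hm
        exact Finset.mem_of_mem_erase hm
      · have hXN : X ⊆ N := by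
          intro x hx
          rcases Finset.mem_insert.1 (hX hx) with rfl | h
          · exact absurd hx hb'X
          · exact h
        exact hN.1.2.2 X hXN hsup
  have heq := hN.2 _ hnested (Finset.subset_insert _ _)
  exact hb'N (heq ▸ Finset.mem_insert_self b' N)

private lemma parent_exists {B N N' : Finset (Finset V)} (hB : IsBuildingSet B)
    (hN : IsNested B N) (hN' : IsNested B N') {b : Finset V}
    (hb : b ∈ N) (hbN' : b ∉ N') :
    ∃ P ∈ N, b ⊂ P ∧ ∀ C ∈ N, b ⊂ C → P ⊆ C := by
  have hbB : b ∈ B := hN.1 hb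
  have hnotmax : ¬ ∀ C ∈ B, b ⊆ C → b = C := fun h => hbN' (hN'.2.1 b hbB h)
  push_neg at hnotmax
  obtain ⟨C₀, hC₀B, hbC₀, hbne⟩ := hnotmax
  have hSne : (B.filter (fun C => b ⊆ C)).Nonempty :=
    ⟨C₀, Finset.mem_filter.2 ⟨hC₀B, hbC₀⟩⟩
  obtain ⟨D, hD, hDmax⟩ := Finset.exists_max_image _ (fun C => C.card) hSne
  obtain ⟨hDB, hbD⟩ := Finset.mem_filter.1 hD
  have hDtop : ∀ C ∈ B, D ⊆ C → D = C := by
    intro C hC hDC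
    exact Finset.eq_of_subset_of_card_le hDC
      (hDmax C (Finset.mem_filter.2 ⟨hC, hbD.trans hDC⟩))
  have hDN : D ∈ N := hN.2.1 D hDB hDtop
  have hbDne : b ≠ D := by
    rintro rfl
    exact hbN' (hN'.2.1 b hbB hDtop)
  have hS2ne : (N.filter (fun C => b ⊂ C)).Nonempty :=
    ⟨D, Finset.mem_filter.2 ⟨hDN, Finset.ssubset_iff_subset_ne.2 ⟨hbD, hbDne⟩⟩⟩
  obtain ⟨P, hPm, hPmin⟩ := Finset.exists_min_image _ (fun C => C.card) hS2ne
  obtain ⟨hPN, hbP⟩ := Finset.mem_filter.1 hPm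
  refine ⟨P, hPN, hbP, ?_⟩
  intro C hC hbC
  have hint : (P ∩ C).Nonempty := by
    obtain ⟨v, hv⟩ := hB.1 b hbB
    exact ⟨v, Finset.mem_inter.2 ⟨hbP.subset hv, hbC.subset hv⟩⟩
  rcases nested_comparable hB hN hPN hC hint with h | h
  · exact h
  · rw [Finset.eq_of_subset_of_card_le h (hPmin C (Finset.mem_filter.2 ⟨hC, hbC⟩))]

private lemma sub_parent {B N N' : Finset (Finset V)} (hB : IsBuildingSet B)
    (hN : IsMaxNested B N) (hN' : IsMaxNested B N') {b b' P : Finset V}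
    (hb : b ∈ N) (hb' : b' ∈ N') (hne : b ≠ b')
    (hadj : N.erase b = N'.erase b')
    (hP : P ∈ N) (hbP : b ⊂ P) : b' ⊆ P := by
  have hb'N : b' ∉ N := not_mem_other hN' hN hb hne.symm hadj.symm
  have hPneb : P ≠ b := fun h => (Finset.ssubset_iff_subset_ne.1 hbP).2 h.symm
  have hPN' : P ∈ N' := mem_other' hadj hP hPneb
  have hbne : b.Nonempty := hB.1 b (hN.1.1 hb)
  have hb'ne : b'.Nonempty := hB.1 b' (hN'.1.1 hb')
  by_cases hint : (b' ∩ P).Nonempty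
  · rcases nested_comparable hB hN'.1 hb' hPN' hint with h | h
    · exact h
    · exact absurd (hbP.subset.trans h) (not_subset_of_exch hB hN hN' hb hb' hne hadj)
  · -- b' ∩ P = ∅; show insert b' N is nested, contradiction
    exfalso
    have hnested : IsNested B (insert b' N) := by
      refine ⟨?_, ?_, ?_⟩
      · intro x hx
        rcases Finset.mem_insert.1 hx with rfl | hx
        · exact hN'.1.1 hb'
        · exact hN.1.1 hx
      · intro K hK hmax; exact Finset.mem_insert_of_mem (hN.1.2.1 K hK hmax)
      · intro X hX hsup
        by_cases hb'X : b' ∈ X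
        · by_cases hbX : b ∈ X
          · by_cases hc1 : b' ⊆ (X.erase b').sup id
            · -- X.erase b' ⊆ N, sup equal
              have hXN : X.erase b' ⊆ N := by
                intro x hx
                obtain ⟨hxb, hxX⟩ := Finset.mem_erase.1 hx
                rcases Finset.mem_insert.1 (hX hxX) with rfl | h
                · exact absurd rfl hxb
                · exact h
              have hsupeq : (X.erase b').sup id = X.sup id := by
                rw [sup_eq_of_mem hb'X]
                exact (Finset.union_eq_right.2 hc1).symm
              have hm := hN.1.2.2 _ hXN (by rw [hsupeq]; exact hsup)
              rw [hsupeq] at hm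
              exact Finset.mem_of_mem_erase hm
            · -- the X₂ argument, derive False
              exfalso
              have hXeN' : X.erase b ⊆ N' := by
                intro x hx
                obtain ⟨hxb, hxX⟩ := Finset.mem_erase.1 hx
                rcases Finset.mem_insert.1 (hX hxX) with rfl | h
                · exact hb'
                · exact mem_other' hadj h hxb
              have hX2N' : insert P (X.erase b) ⊆ N' :=
                Finset.insert_subset hPN' hXeN'
              have hT : (insert P (X.erase b)).sup id = P ∪ (X.erase b).sup id := by
                rw [Finset.sup_insert, id_eq, Finset.sup_eq_union]
              have hXs : X.sup id = b ∪ (X.erase b).sup id := sup_eq_of_mem hbX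
              have hPX : P ∪ X.sup id = P ∪ (X.erase b).sup id := by
                rw [hXs, ← Finset.union_assoc, Finset.union_eq_left.2 hbP.subset]
              have hTB : P ∪ (X.erase b).sup id ∈ B := by
                rw [← hPX]
                refine hB.2.1 P (hN.1.1 hP) _ hsup ?_
                obtain ⟨v, hv⟩ := hbne
                exact ⟨v, Finset.mem_inter.2 ⟨hbP.subset hv,
                  Finset.le_sup (f := id) hbX hv⟩⟩
              have hm := hN'.1.2.2 _ hX2N' (by rw [hT]; exact hTB)
              rw [hT] at hm
              have hb's : b' ⊆ (X.erase b).sup id :=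
                Finset.le_sup (f := id) (Finset.mem_erase.2 ⟨hne.symm, hb'X⟩)
              rcases Finset.mem_insert.1 hm with h1 | h1
              · -- P ∪ s = P, so b' ⊆ P, contra disjointness
                have : b' ⊆ P := hb's.trans (Finset.union_eq_left.1 h1)
                obtain ⟨v, hv⟩ := hb'ne
                exact hint ⟨v, Finset.mem_inter.2 ⟨hv, this hv⟩⟩
              · obtain ⟨hTb, hTX⟩ := Finset.mem_erase.1 h1
                by_cases hTb' : P ∪ (X.erase b).sup id = b'
                · -- P ⊆ b', contra disjointness
                  have : P ⊆ b' := hTb' ▸ Finset.subset_union_left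
                  obtain ⟨v, hv⟩ := hbne
                  exact hint ⟨v, Finset.mem_inter.2 ⟨this (hbP.subset hv), hbP.subset hv⟩⟩
                · -- T ∈ X.erase b', so b' ⊆ sup (X.erase b'), contra hc1
                  have hTXe : P ∪ (X.erase b).sup id ∈ X.erase b' :=
                    Finset.mem_erase.2 ⟨hTb', hTX⟩
                  have : b' ⊆ (X.erase b').sup id :=
                    (hb's.trans Finset.subset_union_right).trans
                      (Finset.le_sup (f := id) hTXe)
                  exact hc1 this
          · -- b ∉ X : X ⊆ N'
            have hXN' : X ⊆ N' := by
              intro x hx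
              rcases Finset.mem_insert.1 (hX hx) with rfl | h
              · exact hb'
              · exact mem_other' hadj h (fun he => hbX (he ▸ hx))
            exact hN'.1.2.2 X hXN' hsup
        · have hXN : X ⊆ N := by
            intro x hx
            rcases Finset.mem_insert.1 (hX hx) with rfl | h
            · exact absurd hx hb'X
            · exact h
          exact hN.1.2.2 X hXN hsup
    have heq := hN.2 _ hnested (Finset.subset_insert _ _)
    exact hb'N (heq ▸ Finset.mem_insert_self b' N)

theorem stmt5 (B : Finset (Finset V)) (hB : IsBuildingSet B)
    (N N' : Finset (Finset V)) (hN : IsMaxNested B N) (hN' : IsMaxNested B N')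
    (b b' : Finset V) (hb : b ∈ N) (hb' : b' ∈ N') (hne : b ≠ b')
    (hadj : N.erase b = N'.erase b') :
    N.filter (fun C => b ⊂ C) = N'.filter (fun C => b' ⊂ C) := by
  have hbN' : b ∉ N' := not_mem_other hN hN' hb' hne hadj
  have hb'N : b' ∉ N := not_mem_other hN' hN hb hne.symm hadj.symm
  obtain ⟨P, hP, hbP, hPmin⟩ := parent_exists hB hN.1 hN'.1 hb hbN'
  obtain ⟨P', hP', hbP', hP'min⟩ := parent_exists hB hN'.1 hN.1 hb' hb'N
  have hb'P : b' ⊆ P := sub_parent hB hN hN' hb hb' hne hadj hP hbP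
  have hbP'2 : b ⊆ P' := sub_parent hB hN' hN hb' hb hne.symm hadj.symm hP' hbP'
  have hPN' : P ∈ N' := mem_other' hadj hP
    (fun h => (Finset.ssubset_iff_subset_ne.1 hbP).2 h.symm)
  have hP'N : P' ∈ N := mem_other' hadj.symm hP'
    (fun h => (Finset.ssubset_iff_subset_ne.1 hbP').2 h.symm)
  have h1 : P' ⊆ P := hP'min P hPN'
    (Finset.ssubset_iff_subset_ne.2 ⟨hb'P, fun h => hb'N (h ▸ hP)⟩)
  have h2 : P ⊆ P' := hPmin P' hP'N
    (Finset.ssubset_iff_subset_ne.2 ⟨hbP'2, fun h => hbN' (h ▸ hP')⟩)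
  ext C
  simp only [Finset.mem_filter]
  constructor
  · rintro ⟨hCN, hbC⟩
    have hPC : P ⊆ C := hPmin C hCN hbC
    refine ⟨mem_other' hadj hCN
      (fun h => (Finset.ssubset_iff_subset_ne.1 hbC).2 h.symm), ?_⟩
    exact Finset.ssubset_iff_subset_ne.2
      ⟨hb'P.trans hPC, fun h => hb'N (h ▸ hCN)⟩
  · rintro ⟨hCN', hb'C⟩
    have hP'C : P' ⊆ C := hP'min C hCN' hb'C
    refine ⟨mem_other' hadj.symm hCN'
      (fun h => (Finset.ssubset_iff_subset_ne.1 hb'C).2 h.symm), ?_⟩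
    exact Finset.ssubset_iff_subset_ne.2
      ⟨hbP'2.trans hP'C, fun h => hbN' (h ▸ hCN')⟩
end

section
/- Let B be a building set on a finite ground set V. Two blocks B₀, B₀' ∈ B are exchangeable (i.e., there exist maximal B-nested sets N, N' with N \ {B₀} = N' \ {B₀'}) if and only if there exist a block P ∈ B and vertices v ∈ B₀ \ B₀' and v' ∈ B₀' \ B₀ such that B₀ ⊊ P, B₀' ⊊ P, and for every C ∈ B with C ⊆ P, C ∩ B₀ ≠ ∅, C ⊄ B₀ one has v' ∈ C, and for every C' ∈ B with C' ⊆ P, C' ∩ B₀' ≠ ∅, C' ⊄ B₀' one has v ∈ C'. -/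
open scoped Classical

variable {V : Type*} [Fintype V] [DecidableEq V]

/-!
For an ordering `x₁, …, xₙ` of `V`, the components of `{xᵢ, …, xₙ}` containing `xᵢ` form a nested
set with `|V|` members. Since the roots of the members of any nested set are nonempty and
disjoint, no nested set is larger, so this one is maximal. Listing `V \ P` first, then `v'`, `v`,
and then `P \ {v, v'}` produces `P` and `b`; swapping `v` and `v'` produces `P` and `b'` instead and
changes nothing else. This gives the exchange.

Conversely, in a maximal nested set every root is a single vertex: otherwise a component inside a
member with one root vertex deleted could be added. If `N \ {b} = N' \ {b'}`, comparing the roots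
in `N` and in `N'` shows that `b` and `b'` have the same parent `P`, and that the root `v'` of `b'`
in `N'` is the root of `P` in `N`, and symmetrically for the root `v` of `b`. A block inside `P`
that meets `b`, is not contained in `b` and avoids `v'` would, together with `b`, lie in a member
of `N` strictly between `b` and `P`.
-/

def component (B : Finset (Finset V)) (S : Finset V) (x : V) : Finset V :=
  (B.filter fun C => C ⊆ S ∧ x ∈ C).sup id

section Component

variable {B : Finset (Finset V)} {S C K : Finset V} {x : V}

omit [Fintype V] in
lemma subset_component (hC : C ∈ B) (hCS : C ⊆ S) (hx : x ∈ C) : C ⊆ component B S x :=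
  Finset.le_sup (f := id) (Finset.mem_filter.mpr ⟨hC, hCS, hx⟩)

omit [Fintype V] in
lemma component_subset : component B S x ⊆ S :=
  Finset.sup_le fun _ hC => (Finset.mem_filter.mp hC).2.1

omit [Fintype V] in
lemma mem_component (hB : IsBuildingSet B) (hx : x ∈ S) : x ∈ component B S x :=
  subset_component (hB.2.2 x) (Finset.singleton_subset_iff.mpr hx) (Finset.mem_singleton_self x)
    (Finset.mem_singleton_self x)

omit [Fintype V] in
lemma component_mem (hB : IsBuildingSet B) (hx : x ∈ S) : component B S x ∈ B := by
  have hne : (B.filter fun C => C ⊆ S ∧ x ∈ C).Nonempty :=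
    ⟨{x}, Finset.mem_filter.mpr ⟨hB.2.2 x, Finset.singleton_subset_iff.mpr hx, by simp⟩⟩
  rw [component, ← Finset.sup'_eq_sup hne]
  refine (Finset.sup'_induction hne id (p := fun C => C ∈ B ∧ x ∈ C) ?_ ?_).1
  · exact fun C₁ h₁ C₂ h₂ =>
      ⟨hB.2.1 _ h₁.1 _ h₂.1 ⟨x, Finset.mem_inter.mpr ⟨h₁.2, h₂.2⟩⟩, Finset.mem_union_left _ h₁.2⟩
  · exact fun C hC => ⟨(Finset.mem_filter.mp hC).1, (Finset.mem_filter.mp hC).2.2⟩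

omit [Fintype V] in
lemma component_eq (hK : K ∈ B) (hKS : K ⊆ S) (hx : x ∈ K)
    (hmax : ∀ C ∈ B, C ⊆ S → x ∈ C → C ⊆ K) : component B S x = K :=
  (Finset.sup_le fun C hC => by
    obtain ⟨hCB, hCS, hxC⟩ := Finset.mem_filter.mp hC
    exact hmax C hCB hCS hxC).antisymm (subset_component hK hKS hx)

lemma component_univ_maximal (hB : IsBuildingSet B) (hC : C ∈ B)
    (h : component B Finset.univ x ⊆ C) : component B Finset.univ x = C :=
  h.antisymm
    (subset_component hC (Finset.subset_univ C) (h (mem_component hB (Finset.mem_univ x))))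

end Component

section Root

variable {N : Finset (Finset V)} {A C : Finset V} {u : V}

omit [Fintype V] in
lemma mem_root_iff : u ∈ root N C ↔ u ∈ C ∧ ∀ D ∈ N, D ⊂ C → u ∉ D := by
  simp only [root, Finset.mem_sdiff, Finset.mem_sup, Finset.mem_filter, id]
  exact and_congr_right' ⟨fun h D hD hDC hu => h ⟨D, ⟨hD, hDC⟩, hu⟩,
    fun h ⟨D, ⟨hD, hDC⟩, hu⟩ => h D hD hDC hu⟩

omit [Fintype V] in
lemma root_subset : root N C ⊆ C := Finset.sdiff_subset

omit [Fintype V] in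
lemma subset_erase_of_mem_root {r : V} (hr : r ∈ root N A) (hC : C ∈ N) (hCA : C ⊂ A) :
    C ⊆ A.erase r := fun _ hu =>
  Finset.mem_erase.mpr ⟨fun h => (mem_root_iff.mp hr).2 C hC hCA (h ▸ hu), hCA.subset hu⟩

end Root

namespace IsNested

variable {B N : Finset (Finset V)} {A C : Finset V} {u : V}

omit [Fintype V] in
lemma subset_or_subset (hB : IsBuildingSet B) (hN : IsNested B N) (hA : A ∈ N) (hC : C ∈ N)
    (h : (A ∩ C).Nonempty) : A ⊆ C ∨ C ⊆ A := by
  have hpair : ({A, C} : Finset (Finset V)).sup id = A ∪ C := by simp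
  have hmem := hN.2.2 {A, C} (Finset.insert_subset hA (Finset.singleton_subset_iff.mpr hC))
    (hpair ▸ hB.2.1 _ (hN.1 hA) _ (hN.1 hC) h)
  rw [hpair, Finset.mem_insert, Finset.mem_singleton] at hmem
  rcases hmem with h | h
  · exact Or.inr (h ▸ Finset.subset_union_right)
  · exact Or.inl (h ▸ Finset.subset_union_left)

omit [Fintype V] in
lemma root_nonempty (hN : IsNested B N) (hA : A ∈ N) : (root N A).Nonempty := by
  rw [Finset.nonempty_iff_ne_empty, root, Ne, Finset.sdiff_eq_empty_iff_subset]
  intro hcover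
  have hsup : (N.filter (· ⊂ A)).sup id = A :=
    (Finset.sup_le fun _ hD => (Finset.mem_filter.mp hD).2.subset).antisymm hcover
  have hmem := hN.2.2 _ (Finset.filter_subset _ N) (hsup ▸ hN.1 hA)
  rw [hsup] at hmem
  exact (Finset.mem_filter.mp hmem).2.ne rfl

omit [Fintype V] in
lemma eq_of_mem_root (hB : IsBuildingSet B) (hN : IsNested B N) (hA : A ∈ N) (hC : C ∈ N)
    (huA : u ∈ root N A) (huC : u ∈ root N C) : A = C := by
  by_contra hne
  have huAC : (A ∩ C).Nonempty := ⟨u, Finset.mem_inter.mpr ⟨root_subset huA, root_subset huC⟩⟩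
  rcases hN.subset_or_subset hB hA hC huAC with h | h
  · exact (mem_root_iff.mp huC).2 A hA (h.ssubset_of_ne hne) (root_subset huA)
  · exact (mem_root_iff.mp huA).2 C hC (h.ssubset_of_ne (Ne.symm hne)) (root_subset huC)

lemma card_le (hB : IsBuildingSet B) (hN : IsNested B N) : N.card ≤ Fintype.card V :=
  calc N.card ≤ (N.biUnion (root N)).card :=
        Finset.card_le_card_biUnion
          (fun _ hA _ hC hne => Finset.disjoint_left.mpr fun _ huA huC =>
            hne (hN.eq_of_mem_root hB hA hC huA huC))
          (fun _ hA => hN.root_nonempty hA)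
    _ ≤ Fintype.card V := Finset.card_le_univ _

lemma component_univ_mem (hB : IsBuildingSet B) (hN : IsNested B N) (x : V) :
    component B Finset.univ x ∈ N :=
  hN.2.1 _ (component_mem hB (Finset.mem_univ x)) fun _ hC h =>
    component_univ_maximal hB hC h

end IsNested

lemma isMaxNested_of_card_le {B N : Finset (Finset V)} (hB : IsBuildingSet B) (hN : IsNested B N)
    (hcard : Fintype.card V ≤ N.card) : IsMaxNested B N :=
  ⟨hN, fun _ hN' hsub => Finset.eq_of_subset_of_card_le hsub ((hN'.card_le hB).trans hcard)⟩

/-- The nested set of an ordering `x₁, …, xₙ` of the vertices: the components of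
`{xᵢ, …, xₙ}` containing `xᵢ`. -/
def orderNested (B : Finset (Finset V)) : List V → Finset (Finset V)
  | [] => ∅
  | x :: l => insert (component B (x :: l).toFinset x) (orderNested B l)

section OrderNested

variable {B : Finset (Finset V)} {l : List V}

omit [Fintype V] in
lemma subset_toFinset_of_mem_orderNested {C : Finset V} (hC : C ∈ orderNested B l) :
    C ⊆ l.toFinset := by
  induction l with
  | nil => simp [orderNested] at hC
  | cons x l ih =>
    rcases Finset.mem_insert.mp hC with rfl | hC
    · exact component_subset
    · rw [List.toFinset_cons]
      exact (ih hC).trans (Finset.subset_insert x _)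

omit [Fintype V] in
lemma orderNested_subset (hB : IsBuildingSet B) : orderNested B l ⊆ B := by
  induction l with
  | nil => simp [orderNested]
  | cons x l ih => exact Finset.insert_subset (component_mem hB (by simp)) ih

omit [Fintype V] in
lemma sup_mem_of_subset_orderNested (hB : IsBuildingSet B) {X : Finset (Finset V)}
    (hX : X ⊆ orderNested B l) (hXB : X.sup id ∈ B) : X.sup id ∈ X := by
  induction l generalizing X with
  | nil =>
    rw [orderNested, Finset.subset_empty] at hX
    subst hX
    exact absurd (hB.1 _ hXB) (by simp)
  | cons x l ih =>
    set K := component B (x :: l).toFinset x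
    by_cases hK : K ∈ X
    · have hsub : X.sup id ⊆ (x :: l).toFinset :=
        Finset.sup_le fun _ hC => subset_toFinset_of_mem_orderNested (hX hC)
      have hKsup : K ⊆ X.sup id := Finset.le_sup (f := id) hK
      have heq : X.sup id = K := (subset_component hXB hsub
        (hKsup (mem_component hB (by simp)))).antisymm hKsup
      exact heq ▸ hK
    · exact ih (fun C hC => (Finset.mem_insert.mp (hX hC)).resolve_left
        fun h => hK (by rwa [h] at hC)) hXB

omit [Fintype V] in
lemma mem_orderNested_of_maximal (hB : IsBuildingSet B) {M : Finset V} (hM : M ∈ B)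
    (hmax : ∀ C ∈ B, M ⊆ C → M = C) (hMl : M ⊆ l.toFinset) : M ∈ orderNested B l := by
  induction l with
  | nil =>
    obtain ⟨y, hy⟩ := hB.1 M hM
    simpa using hMl hy
  | cons x l ih =>
    by_cases hx : x ∈ M
    · rw [hmax _ (component_mem hB (by simp)) (subset_component hM hMl hx)]
      exact Finset.mem_insert_self _ _
    · refine Finset.mem_insert_of_mem (ih fun y hy => ?_)
      have := hMl hy
      rw [List.toFinset_cons, Finset.mem_insert] at this
      exact this.resolve_left fun h => hx (h ▸ hy)

omit [Fintype V] in
lemma isNested_orderNested (hB : IsBuildingSet B) (hl : ∀ x, x ∈ l) :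
    IsNested B (orderNested B l) :=
  ⟨orderNested_subset hB,
    fun _ hM hmax => mem_orderNested_of_maximal hB hM hmax fun y _ => List.mem_toFinset.mpr (hl y),
    fun _ hX hXB => sup_mem_of_subset_orderNested hB hX hXB⟩

omit [Fintype V] in
lemma card_orderNested (hB : IsBuildingSet B) (hl : l.Nodup) :
    (orderNested B l).card = l.length := by
  induction l with
  | nil => rfl
  | cons x l ih =>
    rw [List.nodup_cons] at hl
    have hnew : component B (x :: l).toFinset x ∉ orderNested B l := fun h =>
      hl.1 (List.mem_toFinset.mp
        (subset_toFinset_of_mem_orderNested h (mem_component hB (by simp))))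
    rw [orderNested, Finset.card_insert_of_notMem hnew, ih hl.2, List.length_cons]

lemma isMaxNested_orderNested (hB : IsBuildingSet B) (hnd : l.Nodup) (hl : ∀ x, x ∈ l) :
    IsMaxNested B (orderNested B l) := by
  refine isMaxNested_of_card_le hB (isNested_orderNested hB hl) ?_
  rw [card_orderNested hB hnd, ← List.toFinset_card_of_nodup hnd]
  exact Finset.card_le_card fun y _ => List.mem_toFinset.mpr (hl y)

omit [Fintype V] in
lemma exists_orderNested_append (hB : IsBuildingSet B) (T : Finset V) (pre : List V) :
    ∃ E : Finset (Finset V), (∀ C ∈ E, ∃ x ∈ pre, x ∈ C) ∧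
      ∀ l : List V, l.toFinset = T → orderNested B (pre ++ l) = E ∪ orderNested B l := by
  induction pre with
  | nil => exact ⟨∅, by simp, fun l _ => by simp⟩
  | cons x pre ih =>
    obtain ⟨E, hE, happ⟩ := ih
    refine ⟨insert (component B (insert x (pre.toFinset ∪ T)) x) E, ?_, fun l hl => ?_⟩
    · intro C hC
      rcases Finset.mem_insert.mp hC with rfl | hC
      · exact ⟨x, List.mem_cons_self, mem_component hB (Finset.mem_insert_self _ _)⟩
      · obtain ⟨y, hy, hyC⟩ := hE C hC
        exact ⟨y, List.mem_cons_of_mem x hy, hyC⟩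
    · rw [List.cons_append, orderNested, happ l hl, Finset.insert_union, List.toFinset_cons,
        List.toFinset_append, hl]

-- `E` comes from listing the vertices outside `T` first.
lemma exists_isMaxNested_union (hB : IsBuildingSet B) (T : Finset V) :
    ∃ E : Finset (Finset V), (∀ C ∈ E, ¬ C ⊆ T) ∧
      ∀ l : List V, l.Nodup → l.toFinset = T → IsMaxNested B (E ∪ orderNested B l) := by
  obtain ⟨E, hE, happ⟩ := exists_orderNested_append hB T (Finset.univ \ T).toList
  refine ⟨E, fun C hC hCT => ?_, fun l hnd hl => ?_⟩
  · obtain ⟨x, hx, hxC⟩ := hE C hC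
    exact (Finset.mem_sdiff.mp (Finset.mem_toList.mp hx)).2 (hCT hxC)
  · rw [← happ l hl]
    refine isMaxNested_orderNested hB ?_ fun y => ?_
    · refine List.nodup_append.mpr ⟨Finset.nodup_toList _, hnd, fun x hx y hy hxy => ?_⟩
      rw [Finset.mem_toList, Finset.mem_sdiff, ← hl, List.mem_toFinset] at hx
      exact hx.2 (hxy ▸ hy)
    · by_cases hy : y ∈ T
      · exact List.mem_append_right _ (List.mem_toFinset.mp (hl ▸ hy))
      · exact List.mem_append_left _ (Finset.mem_toList.mpr (by simp [hy]))

end OrderNested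

section Backward

variable {B : Finset (Finset V)} {P b b' : Finset V} {v v' : V}

omit [Fintype V] in
lemma toFinset_cons_cons_erase (hv : v ∈ P) (hv' : v' ∈ P) :
    (v' :: v :: ((P.erase v').erase v).toList).toFinset = P := by
  ext u
  by_cases hu : u = v <;> by_cases hu' : u = v' <;> simp_all

omit [Fintype V] in
lemma nodup_cons_cons_erase (hne : v ≠ v') :
    (v' :: v :: ((P.erase v').erase v).toList).Nodup := by
  simp [Ne.symm hne, Finset.nodup_toList]

omit [Fintype V] in
-- The hypothesis `H` makes `b` the component of `P \ {v'}` containing `v`.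
lemma orderNested_cons_cons_erase (hP : P ∈ B) (hb : b ∈ B) (hbP : b ⊆ P) (hvb : v ∈ b)
    (hv'P : v' ∈ P) (hv'b : v' ∉ b)
    (H : ∀ C ∈ B, C ⊆ P → (C ∩ b).Nonempty → ¬ C ⊆ b → v' ∈ C) :
    orderNested B (v' :: v :: ((P.erase v').erase v).toList) =
      insert P (insert b (orderNested B ((P.erase v').erase v).toList)) := by
  have hv : v ∈ P.erase v' := Finset.mem_erase.mpr ⟨fun h => hv'b (h ▸ hvb), hbP hvb⟩
  have hS : (v :: ((P.erase v').erase v).toList).toFinset = P.erase v' := by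
    rw [List.toFinset_cons, Finset.toList_toFinset, Finset.insert_erase hv]
  have hbS : b ⊆ P.erase v' := fun u hu =>
    Finset.mem_erase.mpr ⟨fun h => hv'b (h ▸ hu), hbP hu⟩
  have hcomp : component B (P.erase v') v = b := component_eq hb hbS hvb fun C hC hCS hvC => by
    by_contra hCb
    exact (Finset.mem_erase.mp (hCS (H C hC (hCS.trans (Finset.erase_subset _ _))
      ⟨v, Finset.mem_inter.mpr ⟨hvC, hvb⟩⟩ hCb))).1 rfl
  rw [orderNested, orderNested, toFinset_cons_cons_erase (hbP hvb) hv'P, hS, hcomp,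
    component_eq hP subset_rfl hv'P fun _ _ hC _ => hC]

lemma exchangeableB_of_frame (hB : IsBuildingSet B) (hb : b ∈ B) (hb' : b' ∈ B) (hP : P ∈ B)
    (hvb : v ∈ b) (hvb' : v ∉ b') (hv'b' : v' ∈ b') (hv'b : v' ∉ b)
    (hbP : b ⊂ P) (hb'P : b' ⊂ P)
    (H : ∀ C ∈ B, C ⊆ P → (C ∩ b).Nonempty → ¬ C ⊆ b → v' ∈ C)
    (H' : ∀ C ∈ B, C ⊆ P → (C ∩ b').Nonempty → ¬ C ⊆ b' → v ∈ C) :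
    ExchangeableB B b b' := by
  have hvP := hbP.subset hvb
  have hv'P := hb'P.subset hv'b'
  have hne : v ≠ v' := fun h => hv'b (h ▸ hvb)
  obtain ⟨E, hE, hmax⟩ := exists_isMaxNested_union hB P
  set R := orderNested B ((P.erase v').erase v).toList with hR
  have hN := hmax _ (nodup_cons_cons_erase hne) (toFinset_cons_cons_erase hvP hv'P)
  have hN' := hmax _ (nodup_cons_cons_erase hne.symm) (toFinset_cons_cons_erase hv'P hvP)
  rw [orderNested_cons_cons_erase hP hb hbP.subset hvb hv'P hv'b H, Finset.union_insert,
    Finset.union_insert, Finset.insert_comm] at hN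
  rw [orderNested_cons_cons_erase hP hb' hb'P.subset hv'b' hvP hvb' H', Finset.erase_right_comm,
    ← hR, Finset.union_insert, Finset.union_insert, Finset.insert_comm] at hN'
  have hnot : ∀ {c : Finset V} {u : V}, c ⊂ P → u ∈ c → u ∈ ({v, v'} : Finset V) →
      c ∉ insert P (E ∪ R) := by
    intro c u hcP huc hu hmem
    rcases Finset.mem_insert.mp hmem with rfl | hmem
    · exact hcP.ne rfl
    rcases Finset.mem_union.mp hmem with hcE | hcR
    · exact hE c hcE hcP.subset
    · have := subset_toFinset_of_mem_orderNested hcR huc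
      simp only [Finset.toList_toFinset, Finset.mem_erase] at this
      simp only [Finset.mem_insert, Finset.mem_singleton] at hu
      tauto
  refine ⟨fun h => hvb' (h ▸ hvb), _, _, hN, hN', Finset.mem_insert_self _ _,
    Finset.mem_insert_self _ _, ?_⟩
  rw [Finset.erase_insert (hnot hbP hvb (by simp)), Finset.erase_insert (hnot hb'P hv'b' (by simp))]

end Backward

namespace IsNested

variable {B N : Finset (Finset V)} {A S b P D : Finset V} {x v w : V}

omit [Fintype V] in
-- A block `⋃ X` with `K ∈ X` either stays inside `S`, and then equals `K`, or, joined with `A`,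
-- is a block that is a union of members of `N`, hence one of them.
lemma insert_component (hB : IsBuildingSet B) (hN : IsNested B N) (hA : A ∈ N) (hSA : S ⊆ A)
    (hsub : ∀ C ∈ N, C ⊂ A → C ⊆ S) (hx : x ∈ S) :
    IsNested B (insert (component B S x) N) := by
  set K := component B S x
  refine ⟨Finset.insert_subset (component_mem hB hx) hN.1,
    fun M hM hmax => Finset.mem_insert_of_mem (hN.2.1 M hM hmax), fun X hX hUB => ?_⟩
  by_cases hKX : K ∈ X
  swap
  · exact hN.2.2 X (fun C hC => (Finset.mem_insert.mp (hX hC)).resolve_left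
      fun h => hKX (by rwa [h] at hC)) hUB
  have hY : X.erase K ⊆ N := fun C hC =>
    (Finset.mem_insert.mp (hX (Finset.mem_of_mem_erase hC))).resolve_left
      (Finset.ne_of_mem_erase hC)
  have hU : X.sup id = K ∪ (X.erase K).sup id := by
    conv_lhs => rw [← Finset.insert_erase hKX]
    rw [Finset.sup_insert]
    rfl
  have hKA : K ⊆ A := component_subset.trans hSA
  have hxU : x ∈ X.sup id := Finset.le_sup (f := id) hKX (mem_component hB hx)
  have hZ : (insert A (X.erase K)).sup id = X.sup id ∪ A := by
    rw [Finset.sup_insert, hU, Finset.union_comm _ A, ← Finset.union_assoc,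
      Finset.union_eq_left.mpr hKA]
    rfl
  have hmem := hN.2.2 _ (Finset.insert_subset hA hY)
    (hZ ▸ hB.2.1 _ hUB _ (hN.1 hA) ⟨x, Finset.mem_inter.mpr ⟨hxU, hSA hx⟩⟩)
  rw [hZ] at hmem
  rcases Finset.mem_insert.mp hmem with hUA | hUY
  · have hUA : X.sup id ⊆ A := Finset.union_eq_right.mp hUA
    by_cases hUS : X.sup id ⊆ S
    · rwa [(subset_component hUB hUS hxU).antisymm (Finset.le_sup (f := id) hKX)]
    obtain ⟨C, hC, hCS⟩ : ∃ C ∈ X, ¬ C ⊆ S := by simpa [Finset.sup_le_iff] using hUS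
    have hCK : C ≠ K := fun h => hCS (h ▸ component_subset)
    have hCA : C = A := by
      by_contra hne
      exact hCS (hsub C (hY (Finset.mem_erase.mpr ⟨hCK, hC⟩))
        (((Finset.le_sup (f := id) hC).trans hUA).ssubset_of_ne hne))
    rw [hUA.antisymm (hCA ▸ Finset.le_sup (f := id) hC), ← hCA]
    exact hC
  · have hUX := Finset.mem_of_mem_erase hUY
    rwa [Finset.subset_union_left.antisymm (Finset.le_sup (f := id) hUX)]

lemma exists_isParent (hB : IsBuildingSet B) (hN : IsNested B N) (hb : b ∈ B) {C : Finset V}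
    (hC : C ∈ B) (hbC : b ⊂ C) : ∃ P, IsParent N b P := by
  obtain ⟨x, hx⟩ := hB.1 b hb
  have hbM : b ⊂ component B Finset.univ x :=
    hbC.trans_subset (subset_component hC (Finset.subset_univ C) (hbC.subset hx))
  obtain ⟨P, hP, hmin⟩ := (N.filter (b ⊂ ·)).exists_min_image Finset.card
    ⟨_, Finset.mem_filter.mpr ⟨hN.component_univ_mem hB x, hbM⟩⟩
  rw [Finset.mem_filter] at hP
  refine ⟨P, hP.1, hP.2, fun D hD hbD => ?_⟩
  have hPD : (P ∩ D).Nonempty := ⟨x, Finset.mem_inter.mpr ⟨hP.2.subset hx, hbD.subset hx⟩⟩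
  rcases hN.subset_or_subset hB hP.1 hD hPD with h | h
  · exact h
  · exact (Finset.eq_of_subset_of_card_le h
      (hmin D (Finset.mem_filter.mpr ⟨hD, hbD⟩))).superset

omit [Fintype V] in
lemma eq_of_isParent_of_mem_root (hB : IsBuildingSet B) (hN : IsNested B N) (hb : b ∈ N)
    (hP : IsParent N b P) (hv : v ∈ root N b) (hD : D ∈ N) (hDP : D ⊂ P) (hvD : v ∈ D) :
    D = b := by
  by_contra hne
  rcases hN.subset_or_subset hB hD hb ⟨v, Finset.mem_inter.mpr ⟨hvD, root_subset hv⟩⟩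
    with h | h
  · exact (mem_root_iff.mp hv).2 D hD (h.ssubset_of_ne hne) hvD
  · exact hDP.not_subset (hP.2.2 D hD (h.ssubset_of_ne (Ne.symm hne)))

omit [Fintype V] in
lemma ne_of_mem_root_of_isParent (hB : IsBuildingSet B) (hN : IsNested B N) (hb : b ∈ N)
    (hP : IsParent N b P) (hv : v ∈ root N b) (hw : w ∈ root N P) : v ≠ w := fun hvw =>
  hP.2.1.ne (hN.eq_of_mem_root hB hb hP.1 hv (hvw ▸ hw))

end IsNested

namespace IsMaxNested

variable {B N : Finset (Finset V)} {A S b P C : Finset V} {x y r : V}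

omit [Fintype V] in
lemma component_mem (hB : IsBuildingSet B) (hN : IsMaxNested B N) (hA : A ∈ N) (hSA : S ⊆ A)
    (hsub : ∀ C ∈ N, C ⊂ A → C ⊆ S) (hx : x ∈ S) : component B S x ∈ N :=
  hN.2 _ (hN.1.insert_component hB hA hSA hsub hx) (Finset.subset_insert _ _) ▸
    Finset.mem_insert_self _ _

omit [Fintype V] in
lemma eq_of_mem_root (hB : IsBuildingSet B) (hN : IsMaxNested B N) (hA : A ∈ N)
    (hx : x ∈ root N A) (hy : y ∈ root N A) : x = y := by
  by_contra hxy
  have hxS : x ∈ A.erase y := Finset.mem_erase.mpr ⟨hxy, root_subset hx⟩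
  have hK := hN.component_mem hB hA (Finset.erase_subset y A)
    (fun _ hC hCA => subset_erase_of_mem_root hy hC hCA) hxS
  exact (mem_root_iff.mp hx).2 _ hK
    (component_subset.trans_ssubset (Finset.erase_ssubset (root_subset hy)))
    (mem_component hB hxS)

omit [Fintype V] in
-- Otherwise the component of `P \ {r}` containing `b ∪ C` would be a member of `N` strictly
-- between `b` and `P`.
lemma mem_of_isParent (hB : IsBuildingSet B) (hN : IsMaxNested B N) (hb : b ∈ N)
    (hP : IsParent N b P) (hr : r ∈ root N P) (hC : C ∈ B) (hCP : C ⊆ P)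
    (hCb : (C ∩ b).Nonempty) (hCnb : ¬ C ⊆ b) : r ∈ C := by
  by_contra hrC
  obtain ⟨u, hu⟩ := hCb
  rw [Finset.mem_inter] at hu
  have hbC : b ∪ C ⊆ P.erase r := Finset.union_subset
    (subset_erase_of_mem_root hr hb hP.2.1)
    (fun _ hw => Finset.mem_erase.mpr ⟨fun h => hrC (h ▸ hw), hCP hw⟩)
  have huS : u ∈ P.erase r := hbC (Finset.mem_union_right _ hu.1)
  have hK := hN.component_mem hB hP.1 (Finset.erase_subset r P)
    (fun _ hD hDP => subset_erase_of_mem_root hr hD hDP) huS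
  have hbCK : b ∪ C ⊆ component B (P.erase r) u :=
    subset_component (hB.2.1 _ (hN.1.1 hb) _ hC ⟨u, Finset.mem_inter.mpr ⟨hu.2, hu.1⟩⟩) hbC
      (Finset.mem_union_right _ hu.1)
  by_cases hbK : b = component B (P.erase r) u
  · exact hCnb (hbK ▸ Finset.subset_union_right.trans hbCK)
  · have hPK := hP.2.2 _ hK ((Finset.subset_union_left.trans hbCK).ssubset_of_ne hbK)
    exact (Finset.notMem_erase r P) (component_subset (hPK (root_subset hr)))

end IsMaxNested

structure IsExchange (B N N' : Finset (Finset V)) (b b' : Finset V) : Prop where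
  maxNested : IsMaxNested B N
  maxNested' : IsMaxNested B N'
  mem : b ∈ N
  mem' : b' ∈ N'
  ne : b ≠ b'
  erase_eq : N.erase b = N'.erase b'

namespace IsExchange

variable {B N N' : Finset (Finset V)} {b b' A P : Finset V} {x v v' : V}

omit [Fintype V] in
lemma symm (h : IsExchange B N N' b b') : IsExchange B N' N b' b :=
  ⟨h.maxNested', h.maxNested, h.mem', h.mem, h.ne.symm, h.erase_eq.symm⟩

omit [Fintype V] in
lemma mem_of_ne (h : IsExchange B N N' b b') (hA : A ∈ N) (hAb : A ≠ b) : A ∈ N' :=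
  Finset.mem_of_mem_erase (h.erase_eq ▸ Finset.mem_erase.mpr ⟨hAb, hA⟩)

omit [Fintype V] in
lemma notMem' (h : IsExchange B N N' b b') : b ∉ N' := fun hb =>
  Finset.notMem_erase b N (h.erase_eq ▸ Finset.mem_erase.mpr ⟨h.ne, hb⟩)

lemma exists_isParent (hB : IsBuildingSet B) (h : IsExchange B N N' b b') :
    ∃ P, IsParent N b P := by
  have hbB := h.maxNested.1.1 h.mem
  have hnmax : ¬ ∀ C ∈ B, b ⊆ C → b = C := fun hmax =>
    h.notMem' (h.maxNested'.1.2.1 b hbB hmax)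
  push Not at hnmax
  obtain ⟨C, hC, hbC, hne⟩ := hnmax
  exact h.maxNested.1.exists_isParent hB hbB hC (hbC.ssubset_of_ne hne)

omit [Fintype V] in
lemma mem_root_of_forall_ssubset (h : IsExchange B N N' b b') (hxA : x ∈ A)
    (hx : ∀ D ∈ N, D ⊂ A → x ∈ D → D = b) (hb' : b' ⊂ A → x ∉ b') :
    x ∈ root N' A :=
  mem_root_iff.mpr ⟨hxA, fun D hD hDA hxD => by
    by_cases hDb' : D = b'
    · exact hb' (hDb' ▸ hDA) (hDb' ▸ hxD)
    · exact h.notMem' (hx D (h.symm.mem_of_ne hD hDb') hDA hxD ▸ hD)⟩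

omit [Fintype V] in
lemma ssubset_of_isParent (hB : IsBuildingSet B) (h : IsExchange B N N' b b')
    (hP : IsParent N b P) : b' ⊂ P := by
  by_contra hb'P
  obtain ⟨v, hv⟩ := h.maxNested.1.root_nonempty h.mem
  obtain ⟨w, hw⟩ := h.maxNested.1.root_nonempty hP.1
  have hPN' := h.mem_of_ne hP.1 hP.2.1.ne'
  have hvP : v ∈ root N' P := h.mem_root_of_forall_ssubset (hP.2.1.subset (root_subset hv))
    (fun _ hD hDP hvD => h.maxNested.1.eq_of_isParent_of_mem_root hB h.mem hP hv hD hDP hvD)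
    (absurd · hb'P)
  have hwP : w ∈ root N' P := h.mem_root_of_forall_ssubset (root_subset hw)
    (fun _ hD hDP hwD => absurd hwD ((mem_root_iff.mp hw).2 _ hD hDP)) (absurd · hb'P)
  exact h.maxNested.1.ne_of_mem_root_of_isParent hB h.mem hP hv hw
    (h.maxNested'.eq_of_mem_root hB hPN' hvP hwP)

lemma isParent_symm (hB : IsBuildingSet B) (h : IsExchange B N N' b b') (hP : IsParent N b P) :
    IsParent N' b' P := by
  have hPN' := h.mem_of_ne hP.1 hP.2.1.ne'
  have hb'P := h.ssubset_of_isParent hB hP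
  obtain ⟨P', hP'⟩ :=
    h.maxNested'.1.exists_isParent hB (h.maxNested'.1.1 h.mem') (h.maxNested'.1.1 hPN') hb'P
  have hPP' : P ⊆ P' :=
    hP.2.2 P' (h.symm.mem_of_ne hP'.1 hP'.2.1.ne') (h.symm.ssubset_of_isParent hB hP')
  exact ⟨hPN', hb'P, fun C hC hb'C => hPP'.trans (hP'.2.2 C hC hb'C)⟩

omit [Fintype V] in
lemma subset_of_mem_root (hB : IsBuildingSet B) (h : IsExchange B N N' b b')
    (hP : IsParent N b P) (hv : v ∈ root N b) (hvb' : v ∈ b') : b' ⊆ b := by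
  by_contra hb'b
  obtain ⟨w, hw⟩ := h.maxNested.1.root_nonempty hP.1
  have hb'P := h.ssubset_of_isParent hB hP
  have hwb' : w ∈ b' := h.maxNested.mem_of_isParent hB h.mem hP hw (h.maxNested'.1.1 h.mem')
    hb'P.subset ⟨v, Finset.mem_inter.mpr ⟨hvb', root_subset hv⟩⟩ hb'b
  have hvr : v ∈ root N' b' := h.mem_root_of_forall_ssubset hvb' (fun _ hD hDb' hvD =>
      h.maxNested.1.eq_of_isParent_of_mem_root hB h.mem hP hv hD (hDb'.trans hb'P) hvD)
    (absurd · (ssubset_irrefl _))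
  have hwr : w ∈ root N' b' := h.mem_root_of_forall_ssubset hwb'
    (fun _ hD hDb' hwD => absurd hwD ((mem_root_iff.mp hw).2 _ hD (hDb'.trans hb'P)))
    (absurd · (ssubset_irrefl _))
  exact h.maxNested.1.ne_of_mem_root_of_isParent hB h.mem hP hv hw
    (h.maxNested'.eq_of_mem_root hB h.mem' hvr hwr)

lemma mem_root_of_isParent (hB : IsBuildingSet B) (h : IsExchange B N N' b b')
    (hP : IsParent N b P) (hv : v ∈ root N b) (hv' : v' ∈ root N' b') : v' ∈ root N P := by
  have hP' := h.isParent_symm hB hP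
  have hv'b : v' ∉ b := fun hv'b =>
    have hbb' := h.symm.subset_of_mem_root hB hP' hv' hv'b
    h.ne (hbb'.antisymm (h.subset_of_mem_root hB hP hv (hbb' (root_subset hv))))
  exact h.symm.mem_root_of_forall_ssubset (hP'.2.1.subset (root_subset hv'))
    (fun _ hD hDP hv'D => h.maxNested'.1.eq_of_isParent_of_mem_root hB h.mem' hP' hv' hD hDP hv'D)
    (fun _ => hv'b)

lemma exists_frame (hB : IsBuildingSet B) (h : IsExchange B N N' b b') :
    ∃ P ∈ B, ∃ v ∈ b \ b', ∃ v' ∈ b' \ b, b ⊂ P ∧ b' ⊂ P ∧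
      (∀ C ∈ B, C ⊆ P → (C ∩ b).Nonempty → ¬ C ⊆ b → v' ∈ C) ∧
      (∀ C' ∈ B, C' ⊆ P → (C' ∩ b').Nonempty → ¬ C' ⊆ b' → v ∈ C') := by
  obtain ⟨P, hP⟩ := h.exists_isParent hB
  have hP' := h.isParent_symm hB hP
  obtain ⟨v, hv⟩ := h.maxNested.1.root_nonempty h.mem
  obtain ⟨v', hv'⟩ := h.maxNested'.1.root_nonempty h.mem'
  have hv'P := h.mem_root_of_isParent hB hP hv hv'
  have hvP := h.symm.mem_root_of_isParent hB hP' hv' hv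
  exact ⟨P, h.maxNested.1.1 hP.1,
    v, Finset.mem_sdiff.mpr ⟨root_subset hv, (mem_root_iff.mp hvP).2 b' h.mem' hP'.2.1⟩,
    v', Finset.mem_sdiff.mpr ⟨root_subset hv', (mem_root_iff.mp hv'P).2 b h.mem hP.2.1⟩,
    hP.2.1, hP'.2.1,
    fun _ hC => h.maxNested.mem_of_isParent hB h.mem hP hv'P hC,
    fun _ hC => h.maxNested'.mem_of_isParent hB h.mem' hP' hvP hC⟩

end IsExchange

theorem stmt6 (B : Finset (Finset V)) (hB : IsBuildingSet B)
    (b b' : Finset V) (hb : b ∈ B) (hb' : b' ∈ B) :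
    ExchangeableB B b b' ↔
      ∃ P ∈ B, ∃ v ∈ b \ b', ∃ v' ∈ b' \ b,
        b ⊂ P ∧ b' ⊂ P ∧
        (∀ C ∈ B, C ⊆ P → (C ∩ b).Nonempty → ¬ C ⊆ b → v' ∈ C) ∧
        (∀ C' ∈ B, C' ⊆ P → (C' ∩ b').Nonempty → ¬ C' ⊆ b' → v ∈ C') := by
  constructor
  · rintro ⟨hne, N, N', hN, hN', hbN, hb'N', herase⟩
    exact IsExchange.exists_frame hB ⟨hN, hN', hbN, hb'N', hne, herase⟩
  · rintro ⟨P, hP, v, hv, v', hv', hbP, hb'P, H, H'⟩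
    rw [Finset.mem_sdiff] at hv hv'
    exact exchangeableB_of_frame hB hb hb' hP hv.1 hv.2 hv'.1 hv'.2 hbP hb'P H H'
end

section
/- Let B be a building set on a finite ground set V, and let N, N' be two adjacent maximal B-nested sets with N \ {B₀} = N' \ {B₀'} and parent P. Then the characteristic vectors in ℝ^V satisfy the linear relation χ(B₀) + χ(B₀') + Σ_{K ∈ cc(P \ (B₀ ∪ B₀'))} χ(K) = χ(P) + Σ_{K ∈ cc(B₀ ∩ B₀')} χ(K), where cc(U) denotes the set of connected components of U. -/
open scoped Classical

variable {V : Type*} [Fintype V] [DecidableEq V]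

/-!
The components of `U` partition `U`, so both sums collapse to `χ(P \ (b ∪ b'))` and `χ(b ∩ b')`,
and the identity holds pointwise as soon as `b, b' ⊆ P`. The content is `b' ⊆ P`: otherwise
`insert b N'` would still be nested, contradicting the maximality of `N'`.
-/

section Components

variable {B : Finset (Finset V)} {U : Finset V}

theorem exists_mem_ccSet (hB : IsBuildingSet B) {v : V} (hv : v ∈ U) : ∃ K ∈ ccSet B U, v ∈ K := by
  have hsingleton : {v} ∈ B.filter (fun C => v ∈ C ∧ C ⊆ U) :=
    Finset.mem_filter.2 ⟨hB.2.2 v, Finset.mem_singleton_self v, Finset.singleton_subset_iff.2 hv⟩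
  obtain ⟨K, hK⟩ := Finset.exists_maximal ⟨_, hsingleton⟩
  obtain ⟨hKB, hvK, hKU⟩ := Finset.mem_filter.1 hK.prop
  refine ⟨K, Finset.mem_filter.2 ⟨hKB, hKU, fun C hC hCU hKC => ?_⟩, hvK⟩
  exact (hK.eq_of_ge (Finset.mem_filter.2 ⟨hC, hKC hvK, hCU⟩) hKC).symm

theorem eq_of_mem_ccSet (hB : IsBuildingSet B) {K K' : Finset V} (hK : K ∈ ccSet B U)
    (hK' : K' ∈ ccSet B U) {v : V} (hvK : v ∈ K) (hvK' : v ∈ K') : K = K' := by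
  obtain ⟨hKB, hKU, hKmax⟩ := Finset.mem_filter.1 hK
  obtain ⟨hK'B, hK'U, hK'max⟩ := Finset.mem_filter.1 hK'
  have hunion : K ∪ K' ∈ B := hB.2.1 K hKB K' hK'B ⟨v, Finset.mem_inter.2 ⟨hvK, hvK'⟩⟩
  have hsub : K ∪ K' ⊆ U := Finset.union_subset hKU hK'U
  exact (hKmax _ hunion hsub Finset.subset_union_left).trans
    (hK'max _ hunion hsub Finset.subset_union_right).symm

theorem sum_chi_ccSet (hB : IsBuildingSet B) :
    ∑ K ∈ ccSet B U, chi K = chi U := by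
  funext v
  simp only [Finset.sum_apply, chi, Finset.sum_boole]
  by_cases hv : v ∈ U
  · obtain ⟨K, hK, hvK⟩ := exists_mem_ccSet hB hv
    have hfilter : (ccSet B U).filter (v ∈ ·) = {K} :=
      Finset.eq_singleton_iff_unique_mem.2 ⟨Finset.mem_filter.2 ⟨hK, hvK⟩,
        fun K' hK' => (eq_of_mem_ccSet hB hK (Finset.mem_filter.1 hK').1 hvK
          (Finset.mem_filter.1 hK').2).symm⟩
    simp [hfilter, hv]
  · have hfilter : (ccSet B U).filter (v ∈ ·) = ∅ :=
      Finset.filter_eq_empty_iff.2 fun K hK hvK => hv ((Finset.mem_filter.1 hK).2.1 hvK)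
    simp [hfilter, hv]

end Components

section Exchange

variable {α : Type*} [DecidableEq α]

theorem Finset.mem_of_erase_eq_erase {s t : Finset α} {a a' x : α} (h : s.erase a = t.erase a')
    (hx : x ∈ s) (hxa : x ≠ a) : x ∈ t :=
  Finset.mem_of_mem_erase (h ▸ Finset.mem_erase.2 ⟨hxa, hx⟩)

theorem Finset.sup_id_eq_union_sup_erase {X : Finset (Finset α)} {A : Finset α} (hA : A ∈ X) :
    X.sup id = A ∪ (X.erase A).sup id := by
  conv_lhs => rw [← Finset.insert_erase hA, Finset.sup_insert]
  rfl

variable {B N N' : Finset (Finset α)} {b b' P : Finset α}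

/-- Replacing `b` by its parent `P` gives a family inside `N'` whose union `P ∪ ⋃ X` lies in `B`,
hence is one of its members; that member is not `P` as `b' ⊄ P`, so it is a member of `X`
containing `⋃ X`. -/
theorem sup_mem_of_exchange (hB : IsBuildingSet B) (hN' : IsNested B N') (hbB : b ∈ B)
    (hPN' : P ∈ N') (hbP : b ⊆ P) (hb'P : ¬ b' ⊆ P)
    {X : Finset (Finset α)} (hX : X ⊆ insert b N') (hbX : b ∈ X) (hb'X : b' ∈ X)
    (hsX : X.sup id ∈ B) : X.sup id ∈ X := by
  have hXb : X.erase b ⊆ N' := fun A hA => by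
    rcases Finset.mem_insert.1 (hX (Finset.mem_of_mem_erase hA)) with rfl | hA'
    · exact absurd rfl (Finset.ne_of_mem_erase hA)
    · exact hA'
  have hsup : (insert P (X.erase b)).sup id = P ∪ X.sup id := by
    rw [Finset.sup_insert, Finset.sup_id_eq_union_sup_erase hbX, ← Finset.union_assoc,
      Finset.union_eq_left.2 hbP]
    rfl
  have hPX : P ∪ X.sup id ∈ B := by
    obtain ⟨v, hv⟩ := hB.1 b hbB
    exact hB.2.1 P (hN'.1 hPN') _ hsX
      ⟨v, Finset.mem_inter.2 ⟨hbP hv, Finset.le_sup (f := id) hbX hv⟩⟩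
  have hmem := hN'.2.2 _ (Finset.insert_subset hPN' hXb) (hsup ▸ hPX)
  rw [hsup] at hmem
  rcases Finset.mem_insert.1 hmem with hP | hD
  · exact absurd ((Finset.le_sup (f := id) hb'X).trans (hP ▸ Finset.subset_union_right)) hb'P
  · have hD := Finset.mem_of_mem_erase hD
    rwa [le_antisymm Finset.subset_union_right (Finset.le_sup (f := id) hD)]

theorem isNested_insert_of_exchange (hB : IsBuildingSet B) (hN : IsNested B N)
    (hN' : IsNested B N') (hb : b ∈ N) (hadj : N.erase b = N'.erase b') (hpar : IsParent N b P)
    (hb'P : ¬ b' ⊆ P) : IsNested B (insert b N') := by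
  have hbB : b ∈ B := hN.1 hb
  have hPN' : P ∈ N' := Finset.mem_of_erase_eq_erase hadj hpar.1 (ne_of_ssubset hpar.2.1).symm
  refine ⟨Finset.insert_subset hbB hN'.1,
    fun K hK hmax => Finset.mem_insert_of_mem (hN'.2.1 K hK hmax), fun X hX hsX => ?_⟩
  by_cases hbX : b ∈ X
  · by_cases hb'X : b' ∈ X
    · exact sup_mem_of_exchange hB hN' hbB hPN' hpar.2.1.subset hb'P hX hbX hb'X hsX
    · refine hN.2.2 X (fun A hA => ?_) hsX
      rcases Finset.mem_insert.1 (hX hA) with rfl | hA'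
      · exact hb
      · exact Finset.mem_of_erase_eq_erase hadj.symm hA' (ne_of_mem_of_not_mem hA hb'X)
  · exact hN'.2.2 X (fun A hA => (Finset.mem_insert.1 (hX hA)).resolve_left
      (ne_of_mem_of_not_mem hA hbX)) hsX

theorem subset_parent_of_exchange (hB : IsBuildingSet B) (hN : IsNested B N)
    (hN' : IsMaxNested B N') (hb : b ∈ N) (hne : b ≠ b') (hadj : N.erase b = N'.erase b')
    (hpar : IsParent N b P) : b' ⊆ P := by
  by_contra hb'P
  have hbN' : b ∉ N' := fun h =>
    Finset.notMem_erase b N (hadj ▸ Finset.mem_erase.2 ⟨hne, h⟩)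
  have := hN'.2 _ (isNested_insert_of_exchange hB hN hN'.1 hb hadj hpar hb'P)
    (Finset.subset_insert _ _)
  exact hbN' (this ▸ Finset.mem_insert_self b N')

theorem chi_add_chi_add_chi_sdiff_union (hb : b ⊆ P) (hb' : b' ⊆ P) :
    chi b + chi b' + chi (P \ (b ∪ b')) = chi P + chi (b ∩ b') := by
  funext v
  simp only [Pi.add_apply, chi, Finset.mem_sdiff, Finset.mem_union, Finset.mem_inter]
  by_cases hP : v ∈ P
  · by_cases h : v ∈ b <;> by_cases h' : v ∈ b' <;> simp [h, h', hP]
  · have hvb : v ∉ b := fun h => hP (hb h)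
    have hvb' : v ∉ b' := fun h => hP (hb' h)
    simp [hP, hvb, hvb']

end Exchange

theorem stmt9_general (B : Finset (Finset V)) (hB : IsBuildingSet B)
    (N N' : Finset (Finset V)) (hN : IsMaxNested B N) (hN' : IsMaxNested B N')
    (b b' P : Finset V) (hb : b ∈ N) (hne : b ≠ b')
    (hadj : N.erase b = N'.erase b') (hpar : IsParent N b P) :
    chi b + chi b' + ∑ K ∈ ccSet B (P \ (b ∪ b')), chi K =
      chi P + ∑ K ∈ ccSet B (b ∩ b'), chi K := by
  have hb'P : b' ⊆ P := subset_parent_of_exchange hB hN.1 hN' hb hne hadj hpar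
  rw [sum_chi_ccSet hB, sum_chi_ccSet hB]
  exact chi_add_chi_add_chi_sdiff_union hpar.2.1.subset hb'P

theorem stmt9 (B : Finset (Finset V)) (hB : IsBuildingSet B)
    (N N' : Finset (Finset V)) (hN : IsMaxNested B N) (hN' : IsMaxNested B N')
    (b b' P : Finset V) (hb : b ∈ N) (hb' : b' ∈ N') (hne : b ≠ b')
    (hadj : N.erase b = N'.erase b') (hpar : IsParent N b P) :
    chi b + chi b' + ∑ K ∈ ccSet B (P \ (b ∪ b')), chi K =
      chi P + ∑ K ∈ ccSet B (b ∩ b'), chi K :=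
  stmt9_general B hB N N' hN hN' b b' P hb hne hadj hpar
end
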